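/- arXiv:1907.09464 — 5 statements merged into one kernel-verified Lean document; each statement's English description precedes it below -/
import Mathlib

section
/- Let α, β : ℝ → ℂ be four-times continuously differentiable functions with |α(x)|² + |β(x)|² = 1 and |α^{(k)}(x)|, |β^{(k)}(x)| ≤ 2^{−10k} for all x ∈ ℝ and 1 ≤ k ≤ 4. Define H(x) = e^{ix} α(x) + e^{2ix} β(x). Then for every x ∈ ℝ there exists k ∈ {0,1,2,3} such that |Re(H^{(k)}(x))| ≥ 1/4. -/
/-!
Write `A = e^{ix} α(x)` and `B = e^{2ix} β(x)`, so `|A|² + |B|² = 1`. By Leibniz, `H^{(k)}(x)` differs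
from `i^k A + (2i)^k B` by terms involving derivatives of `α, β`, of total size
`((1 + δ)^k - 1) + ((2 + δ)^k - 2^k) < 1/64` for `δ = 2^{-10}` and `k ≤ 3`. The real parts
`E_k = Re(i^k A + (2i)^k B)` determine `A` and `B` linearly, so if all `|Re H^{(k)}(x)|` were below
`1/4`, every `|E_k|` would be below `17/64`, forcing `|A|² + |B|² ≤ 55/9 · (17/64)² < 1`.
-/

open Complex Finset

theorem iteratedDeriv_cexp_const_mul_ofReal (n : ℕ) (c : ℂ) :
    iteratedDeriv n (fun y : ℝ => exp (c * y)) = fun y : ℝ => c ^ n * exp (c * y) := by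
  induction n with
  | zero => simp
  | succ n ih =>
    funext y
    rw [iteratedDeriv_succ, ih]
    have : HasDerivAt (fun y : ℝ => exp (c * y)) (exp (c * y) * c) y := by
      simpa using ((hasDerivAt_id y).ofReal_comp.const_mul c).cexp
    rw [(this.const_mul (c ^ n)).deriv]
    ring

theorem norm_iteratedDeriv_cexp_mul_sub_le {f : ℝ → ℂ} {n : ℕ} {x δ : ℝ}
    (hf : ContDiffAt ℝ n f x) (c : ℂ)
    (hδ : ∀ j, 1 ≤ j → j ≤ n → ‖iteratedDeriv j f x‖ ≤ δ ^ j) :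
    ‖iteratedDeriv n (fun y : ℝ => exp (c * y) * f y) x - c ^ n * exp (c * x) * f x‖
      ≤ ‖exp (c * x)‖ * ((‖c‖ + δ) ^ n - ‖c‖ ^ n) := by
  have hexp : ContDiffAt ℝ n (fun y : ℝ => exp (c * y)) x :=
    (contDiff_exp.comp (contDiff_const.mul ofRealCLM.contDiff)).contDiffAt
  rw [iteratedDeriv_fun_mul hexp hf]
  simp only [iteratedDeriv_cexp_const_mul_ofReal]
  rw [sum_range_succ, add_pow, sum_range_succ]
  simp only [Nat.choose_self, Nat.cast_one, one_mul, Nat.sub_self, iteratedDeriv_zero,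
    pow_zero, mul_one, add_sub_cancel_right, mul_sum]
  refine (norm_sum_le _ _).trans (sum_le_sum fun i hi => ?_)
  have hi : i < n := mem_range.mp hi
  rw [norm_mul, norm_mul, norm_mul, norm_pow, Complex.norm_natCast]
  have := hδ (n - i) (by omega) (by omega)
  calc (n.choose i : ℝ) * (‖c‖ ^ i * ‖exp (c * x)‖) * ‖iteratedDeriv (n - i) f x‖
      ≤ (n.choose i : ℝ) * (‖c‖ ^ i * ‖exp (c * x)‖) * δ ^ (n - i) := by gcongr
    _ = _ := by ring

theorem rpow_two_neg_ten_mul (j : ℕ) :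
    Real.rpow 2 (-(10 * j : ℕ) : ℝ) = (1 / 1024) ^ j := by
  rw [show Real.rpow 2 _ = (2 : ℝ) ^ (-(10 * j : ℕ) : ℝ) from rfl, Real.rpow_neg (by norm_num),
    Real.rpow_natCast, pow_mul, one_div, inv_pow]
  norm_num

theorem norm_sq_add_norm_sq_le_of_abs_re_le (A B : ℂ) {c : ℝ}
    (h : ∀ k ≤ 3, |(I ^ k * A + (2 * I) ^ k * B).re| ≤ c) :
    ‖A‖ ^ 2 + ‖B‖ ^ 2 ≤ 55 / 9 * c ^ 2 := by
  have h0 := h 0 (by norm_num)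
  have h1 := h 1 (by norm_num)
  have h2 := h 2 (by norm_num)
  have h3 := h 3 (by norm_num)
  norm_num [pow_succ] at h0 h1 h2 h3
  -- With `A = p + qi`, `B = r + si`: `3p = 4E₀ + E₂`, `3r = -(E₀ + E₂)`, `3q = -(4E₁ + E₃)`, `6s = E₁ + E₃`.
  rw [Complex.sq_norm, Complex.sq_norm, Complex.normSq_apply, Complex.normSq_apply]
  nlinarith [abs_le.mp h0, abs_le.mp h1, abs_le.mp h2, abs_le.mp h3]

theorem norm_iteratedDeriv_two_wave_sub_le {α β : ℝ → ℂ} {k : ℕ} {x δ : ℝ}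
    (hα : ContDiffAt ℝ k α x) (hβ : ContDiffAt ℝ k β x)
    (hαd : ∀ j, 1 ≤ j → j ≤ k → ‖iteratedDeriv j α x‖ ≤ δ ^ j)
    (hβd : ∀ j, 1 ≤ j → j ≤ k → ‖iteratedDeriv j β x‖ ≤ δ ^ j) :
    ‖iteratedDeriv k (fun y : ℝ => exp (I * y) * α y + exp (2 * I * y) * β y) x
        - (I ^ k * (exp (I * x) * α x) + (2 * I) ^ k * (exp (2 * I * x) * β x))‖
      ≤ ((1 + δ) ^ k - 1) + ((2 + δ) ^ k - 2 ^ k) := by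
  have hexp (c : ℂ) : ContDiffAt ℝ k (fun y : ℝ => exp (c * y)) x :=
    (contDiff_exp.comp (contDiff_const.mul ofRealCLM.contDiff)).contDiffAt
  rw [iteratedDeriv_fun_add ((hexp I).mul hα) ((hexp (2 * I)).mul hβ)]
  have hA := norm_iteratedDeriv_cexp_mul_sub_le hα I hαd
  have hB := norm_iteratedDeriv_cexp_mul_sub_le hβ (2 * I) hβd
  simp only [Complex.norm_exp, Complex.norm_I] at hA hB
  norm_num at hA hB
  calc _ = ‖(iteratedDeriv k (fun y : ℝ => exp (I * y) * α y) x - I ^ k * exp (I * x) * α x)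
        + (iteratedDeriv k (fun y : ℝ => exp (2 * I * y) * β y) x
          - (2 * I) ^ k * exp (2 * I * x) * β x)‖ := by ring_nf
    _ ≤ _ := (norm_add_le _ _).trans (add_le_add hA hB)

theorem H_some_deriv_large (α β : ℝ → ℂ) (H : ℝ → ℂ)
    (hα : ContDiff ℝ 4 α) (hβ : ContDiff ℝ 4 β)
    (hnorm : ∀ x : ℝ, ‖α x‖ ^ 2 + ‖β x‖ ^ 2 = 1)
    (hαd : ∀ x : ℝ, ∀ k, 1 ≤ k → k ≤ 4 →
      ‖iteratedDeriv k α x‖ ≤ Real.rpow 2 (-(10 * k : ℕ) : ℝ))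
    (hβd : ∀ x : ℝ, ∀ k, 1 ≤ k → k ≤ 4 →
      ‖iteratedDeriv k β x‖ ≤ Real.rpow 2 (-(10 * k : ℕ) : ℝ))
    (hH : H = fun x : ℝ => Complex.exp (Complex.I * x) * α x
      + Complex.exp (2 * Complex.I * x) * β x) :
    ∀ x : ℝ, ∃ k ≤ 3, |(iteratedDeriv k H x).re| ≥ 1 / 4 := by
  intro x
  by_contra! hsmall
  subst hH
  set A := exp (I * x) * α x
  set B := exp (2 * I * x) * β x
  have hre : ∀ k ≤ 3, |(I ^ k * A + (2 * I) ^ k * B).re| ≤ 17 / 64 := by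
    intro k hk
    have hk4 : (k : WithTop ℕ∞) ≤ 4 := mod_cast (by omega : k ≤ 4)
    have herr := norm_iteratedDeriv_two_wave_sub_le (k := k) (δ := 1 / 1024)
      (hα.of_le hk4).contDiffAt (hβ.of_le hk4).contDiffAt
      (fun j hj hjk => rpow_two_neg_ten_mul j ▸ hαd x j hj (by omega))
      (fun j hj hjk => rpow_two_neg_ten_mul j ▸ hβd x j hj (by omega))
    have hnum : ((1 + 1 / 1024) ^ k - 1) + ((2 + 1 / 1024) ^ k - 2 ^ k) ≤ (1 / 64 : ℝ) := by
      interval_cases k <;> norm_num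
    set D := iteratedDeriv k (fun y : ℝ => exp (I * y) * α y + exp (2 * I * y) * β y) x
    set E := I ^ k * A + (2 * I) ^ k * B
    calc |E.re| = |D.re - (D - E).re| := by simp
      _ ≤ |D.re| + ‖D - E‖ := (abs_sub _ _).trans (add_le_add_right (abs_re_le_norm _) _)
      _ ≤ 1 / 4 + 1 / 64 := add_le_add (hsmall k hk).le (herr.trans hnum)
      _ = 17 / 64 := by norm_num
  have hAB : ‖A‖ ^ 2 + ‖B‖ ^ 2 = 1 := by simp [A, B, Complex.norm_exp, hnorm x]
  linarith [norm_sq_add_norm_sq_le_of_abs_re_le A B hre]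
end

section
/- Let f : I → ℝ be (k+1)-times continuously differentiable on an interval I, and let y_0 < y_1 < ⋯ < y_k be points of I. Then for all x ∈ I, |f^{(k)}(x) − Σ_{i=0}^{k} k!·f(y_i) / ∏_{j≠i}(y_i − y_j)| ≤ sup_{x∈I} |x − (1/(k+1)) Σ_{i=0}^{k} y_i| · sup_{x∈I} |f^{(k+1)}(x)|. -/
/-!
`k! ∑ᵢ f(yᵢ) / ∏_{j ≠ i} (yᵢ - yⱼ)` is `k!` times the divided difference `f[y₀, …, y_k]`, the
leading coefficient of the Lagrange interpolant of `f`. Iterated Rolle applied to `f` minus its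
interpolant shows that it equals `f⁽ᵏ⁾(ξ)` for some `ξ` between the nodes. Together with
Neville's recurrence `f[u, S] - f[v, S] = (u - v) f[u, v, S]`, the same fact for `k + 2` nodes
shows that moving one node from `yᵢ` to `cᵢ` changes `k! f[…]` by at most
`|cᵢ - yᵢ| M / (k + 1)`. Moving the nodes one at a time to distinct points within `δ` of `x`,
and comparing the result with `f⁽ᵏ⁾(x)` by the mean value theorem, bounds the error by
`M (2δ + (k + 1)⁻¹ ∑ᵢ |x - yᵢ|)`. The average distance `(k + 1)⁻¹ ∑ᵢ |x - yᵢ|` is convex in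
`x`, so it is largest at an endpoint of the hull of `x` and the nodes, where it is the distance
to the mean of the nodes, at most `C`. Finally let `δ → 0`.
-/

open Finset Polynomial

section DividedDifference

variable {F : Type*} [Field F] [DecidableEq F]

def divDiff (f : F → F) (s : Finset F) : F :=
  ∑ z ∈ s, f z / ∏ w ∈ s.erase z, (z - w)

theorem coeff_interpolate (f : F → F) {s : Finset F} {n : ℕ} (hs : #s = n + 1) :
    (Lagrange.interpolate s id f).coeff n = divDiff f s := by
  have h := Lagrange.coeff_eq_sum (Set.injOn_id _)
    (Lagrange.degree_interpolate_lt f (Set.injOn_id (s : Set F)))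
  rw [hs, Nat.add_sub_cancel] at h
  rw [h]
  exact sum_congr rfl fun z hz => by
    rw [Lagrange.eval_interpolate_at_node _ (Set.injOn_id _) hz]; rfl

theorem eval_iterate_derivative_interpolate (f : F → F) {s : Finset F} {n : ℕ}
    (hs : #s = n + 1) (x : F) :
    (derivative^[n] (Lagrange.interpolate s id f)).eval x = n.factorial * divDiff f s := by
  rw [Lagrange.eval_iterate_derivative_eq_sum (Set.injOn_id _)
    (Lagrange.degree_interpolate_lt _ (Set.injOn_id _)) (by omega), hs, Nat.sub_self]
  simp only [powersetCard_zero, sum_singleton, prod_empty, mul_one]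
  exact congrArg _ <| sum_congr rfl fun z hz => by
    rw [Lagrange.eval_interpolate_at_node _ (Set.injOn_id _) hz]; rfl

theorem divDiff_insert_sub_divDiff_insert (f : F → F) {u v : F} {s : Finset F} (huv : u ≠ v)
    (hu : u ∉ s) (hv : v ∉ s) :
    divDiff f (insert u s) - divDiff f (insert v s) =
      (u - v) * divDiff f (insert u (insert v s)) := by
  have hu' : u ∉ insert v s := by simp [huv, hu]
  have coeff_mul_basisDivisor (t : Finset F) (a b : F) (ht : #t = #s + 1) :
      (Lagrange.interpolate t id f * Lagrange.basisDivisor a b).coeff (#s + 1) =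
        (a - b)⁻¹ * divDiff f t := by
    have htop : (Lagrange.interpolate t id f).coeff (#s + 1) = 0 :=
      coeff_eq_zero_of_degree_lt (ht ▸ Lagrange.degree_interpolate_lt _ (Set.injOn_id _))
    rw [Lagrange.basisDivisor, mul_left_comm, coeff_C_mul, coeff_mul_X_sub_C, htop, zero_mul,
      sub_zero, coeff_interpolate f ht]
  -- the top coefficients of Neville's formula for the interpolant on `insert u (insert v s)`
  have hrec := congrArg (coeff · (#s + 1)) <| Lagrange.interpolate_eq_add_interpolate_erase
    (r := f) (Set.injOn_id _) (mem_insert_self u _) (mem_insert_of_mem (mem_insert_self v s)) huv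
  simp only [coeff_add, id_eq] at hrec
  rw [erase_insert_of_ne huv, erase_insert hv, erase_insert hu',
    coeff_mul_basisDivisor _ _ _ (card_insert_of_notMem hu),
    coeff_mul_basisDivisor _ _ _ (card_insert_of_notMem hv),
    coeff_interpolate f (by rw [card_insert_of_notMem hu', card_insert_of_notMem hv])] at hrec
  have huv' : u - v ≠ 0 := sub_ne_zero.2 huv
  rw [hrec, ← neg_sub u v, inv_neg]
  field_simp
  ring

theorem divDiff_image {ι : Type*} [Fintype ι] [DecidableEq ι] (f : F → F) {y : ι → F}
    (hy : Function.Injective y) :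
    divDiff f (univ.image y) = ∑ i, f (y i) / ∏ j ∈ univ.erase i, (y i - y j) := by
  rw [divDiff, sum_image fun a _ b _ h => hy h]
  refine sum_congr rfl fun i _ => ?_
  rw [← image_erase hy, prod_image fun a _ b _ h => hy h]

end DividedDifference

theorem Polynomial.iteratedDeriv_eval {𝕜 : Type*} [NontriviallyNormedField 𝕜] (p : 𝕜[X])
    (n : ℕ) : iteratedDeriv n (fun x => p.eval x) = fun x => (derivative^[n] p).eval x := by
  induction n generalizing p with
  | zero => simp
  | succ n ih =>
    have hderiv : _root_.deriv (fun x => p.eval x) = fun x => (derivative p).eval x := by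
      ext x; exact Polynomial.deriv p
    rw [iteratedDeriv_succ', hderiv, ih, Function.iterate_succ_apply]

theorem sum_abs_sub_le_card_mul_max {ι : Type*} [Fintype ι] [Nonempty ι] (y : ι → ℝ)
    {a b x : ℝ} (ha : ∀ i, a ≤ y i) (hb : ∀ i, y i ≤ b) (hx : x ∈ Set.Icc a b) :
    ∑ i, |x - y i| ≤ Fintype.card ι *
      max |a - (∑ i, y i) / Fintype.card ι| |b - (∑ i, y i) / Fintype.card ι| := by
  set m := (∑ i, y i) / Fintype.card ι
  have hsum : ∑ i, y i = Fintype.card ι * m := (mul_div_cancel₀ _ (by positivity)).symm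
  have hconv : ConvexOn ℝ Set.univ (∑ i, fun x : ℝ => |x - y i|) :=
    sum_induction _ (ConvexOn ℝ Set.univ) (fun _ _ => ConvexOn.add)
      (convexOn_const 0 convex_univ) fun i _ => by
        simpa [Real.dist_eq] using convexOn_univ_dist (y i)
  have hmax := hconv.le_max_of_mem_Icc (Set.mem_univ a) (Set.mem_univ b) hx
  simp only [Finset.sum_apply] at hmax
  have hsa : ∑ i, |a - y i| = Fintype.card ι * (m - a) := by
    rw [sum_congr rfl fun i _ => by rw [abs_sub_comm, abs_of_nonneg (sub_nonneg.2 (ha i))],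
      sum_sub_distrib, hsum, sum_const, card_univ, nsmul_eq_mul, mul_sub]
  have hsb : ∑ i, |b - y i| = Fintype.card ι * (b - m) := by
    rw [sum_congr rfl fun i _ => abs_of_nonneg (sub_nonneg.2 (hb i)),
      sum_sub_distrib, hsum, sum_const, card_univ, nsmul_eq_mul, mul_sub]
  rw [hsa, hsb, ← mul_max_of_nonneg _ _ (by positivity)] at hmax
  refine hmax.trans (mul_le_mul_of_nonneg_left (max_le_max ?_ (le_abs_self _)) (by positivity))
  rw [abs_sub_comm]
  exact le_abs_self _

theorem sum_abs_sub_div_le_of_abs_sub_mean_le {I : Set ℝ} {n : ℕ} {y : Fin (n + 1) → ℝ}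
    (hy : Monotone y) (hyI : ∀ i, y i ∈ I) {C : ℝ}
    (hC : ∀ x ∈ I, |x - (∑ i, y i) / (n + 1)| ≤ C) {x : ℝ} (hx : x ∈ I) :
    (∑ i, |x - y i|) / (n + 1) ≤ C := by
  have h := sum_abs_sub_le_card_mul_max y (a := min x (y 0)) (b := max x (y (Fin.last n)))
    (fun i => (min_le_right _ _).trans (hy (Fin.zero_le i)))
    (fun i => (hy (Fin.le_last i)).trans (le_max_right _ _)) ⟨min_le_left _ _, le_max_left _ _⟩
  rw [Fintype.card_fin, Nat.cast_succ] at h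
  exact ((div_le_iff₀' (by positivity)).2 h).trans <|
    max_le (hC _ (min_rec' (· ∈ I) hx (hyI 0))) (hC _ (max_rec' (· ∈ I) hx (hyI _)))

namespace Set.OrdConnected

variable {I : Set ℝ}

theorem uniqueDiffOn (hI : I.OrdConnected) {a b : ℝ} (ha : a ∈ I) (hb : b ∈ I)
    (hab : a ≠ b) : UniqueDiffOn ℝ I :=
  uniqueDiffOn_convex hI.convex <| (nonempty_Ioo.2 (min_lt_max.2 hab)).mono <|
    isOpen_Ioo.subset_interior_iff.2 (Ioo_subset_Icc_self.trans (hI.uIcc_subset ha hb))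

theorem infinite_inter_closedBall (hI : I.OrdConnected) {x z : ℝ} (hx : x ∈ I) (hz : z ∈ I)
    (hzx : z ≠ x) {δ : ℝ} (hδ : 0 < δ) : (I ∩ Metric.closedBall x δ).Infinite := by
  have hzx' : 0 < |z - x| := abs_pos.2 (sub_ne_zero.2 hzx)
  set t := min 1 (δ / |z - x|)
  have ht : 0 < t := lt_min one_pos (div_pos hδ hzx')
  set w := x + t • (z - x)
  have hw : w ∈ I := hI.convex.add_smul_sub_mem hx hz ⟨ht.le, min_le_left _ _⟩
  have hwx : x ≠ w := by simp [w, ht.ne', sub_ne_zero.2 hzx]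
  have hwδ : |w - x| ≤ δ := by
    rw [add_sub_cancel_left, smul_eq_mul, abs_mul, abs_of_pos ht]
    exact (le_div_iff₀ hzx').1 (min_le_right _ _)
  refine (Icc_infinite (min_lt_max.2 hwx)).mono fun c hc =>
    ⟨hI.uIcc_subset hx hw hc, ?_⟩
  rw [Metric.mem_closedBall, Real.dist_eq]
  exact (abs_sub_left_of_mem_uIcc hc).trans hwδ

theorem exists_derivWithin_eq_zero (hI : I.OrdConnected) {g : ℝ → ℝ} (hg : ContinuousOn g I)
    {a b : ℝ} (ha : a ∈ I) (hb : b ∈ I) (hab : a < b) (hgab : g a = g b) :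
    ∃ c ∈ Ioo a b, derivWithin g I c = 0 := by
  have hsub : Icc a b ⊆ I := hI.out ha hb
  obtain ⟨c, hc, hc0⟩ := exists_deriv_eq_zero hab (hg.mono hsub) hgab
  have hIc : I ∈ nhds c :=
    Filter.mem_of_superset (Ioo_mem_nhds hc.1 hc.2) (Ioo_subset_Icc_self.trans hsub)
  exact ⟨c, hc, by rw [derivWithin_of_mem_nhds hIc, hc0]⟩

theorem exists_iteratedDerivWithin_eq_zero (hI : I.OrdConnected) (hU : UniqueDiffOn ℝ I)
    {n : ℕ} {g : ℝ → ℝ} (hg : ContDiffOn ℝ n g I) {z : Fin (n + 1) → ℝ}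
    (hz : StrictMono z) (hzI : ∀ i, z i ∈ I) (hgz : ∀ i, g (z i) = 0) :
    ∃ ξ ∈ Icc (z 0) (z (Fin.last n)), iteratedDerivWithin n g I ξ = 0 := by
  induction n generalizing g with
  | zero => exact ⟨z 0, left_mem_Icc.2 le_rfl, by simpa using hgz 0⟩
  | succ n ih =>
    have hrolle (i : Fin (n + 1)) :
        ∃ c ∈ Ioo (z i.castSucc) (z i.succ), derivWithin g I c = 0 :=
      hI.exists_derivWithin_eq_zero hg.continuousOn (hzI _) (hzI _) (hz Fin.castSucc_lt_succ)
        (by rw [hgz, hgz])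
    choose c hc hc0 using hrolle
    have hc_mono : StrictMono c := Fin.strictMono_iff_lt_succ.2 fun i =>
      (hc _).2.trans (Fin.succ_castSucc i ▸ (hc _).1)
    have hcI (i : Fin (n + 1)) : c i ∈ I :=
      hI.out (hzI _) (hzI _) (Ioo_subset_Icc_self (hc i))
    obtain ⟨ξ, hξ, hξ0⟩ := ih (hg.derivWithin hU (by norm_cast)) hc_mono hcI hc0
    refine ⟨ξ, ⟨(hc 0).1.le.trans hξ.1, hξ.2.trans (hc (Fin.last n)).2.le⟩, ?_⟩
    rwa [iteratedDerivWithin_succ']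

theorem exists_iteratedDerivWithin_eq_factorial_mul_divDiff (hI : I.OrdConnected)
    (hU : UniqueDiffOn ℝ I) {n : ℕ} {f : ℝ → ℝ} (hf : ContDiffOn ℝ n f I)
    {s : Finset ℝ} (hs : #s = n + 1) (hsI : ↑s ⊆ I) :
    ∃ ξ ∈ convexHull ℝ (s : Set ℝ),
      iteratedDerivWithin n f I ξ = n.factorial * divDiff f s := by
  set P := Lagrange.interpolate s id f
  have hP : ContDiff ℝ n fun x => P.eval x := by
    have h : ContDiff ℝ n fun x : ℝ => aeval x P := P.contDiff_aeval n
    simpa only [coe_aeval_eq_eval] using h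
  have hzs := s.orderEmbOfFin_mem hs
  obtain ⟨ξ, hξ, hξ0⟩ := hI.exists_iteratedDerivWithin_eq_zero hU
    (g := f - fun x => P.eval x) (hf.sub hP.contDiffOn) (s.orderEmbOfFin hs).strictMono
    (fun i => hsI (hzs i))
    fun i => sub_eq_zero.2 (Lagrange.eval_interpolate_at_node f (Set.injOn_id _) (hzs i)).symm
  have hξs : ξ ∈ convexHull ℝ (s : Set ℝ) :=
    segment_subset_convexHull (hzs 0) (hzs _) (segment_eq_Icc (hξ.1.trans hξ.2) ▸ hξ)
  have hξI : ξ ∈ I := hI.convex.convexHull_subset_iff.2 hsI hξs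
  refine ⟨ξ, hξs, ?_⟩
  rwa [iteratedDerivWithin_sub hξI hU (hf ξ hξI) hP.contDiffWithinAt,
    iteratedDerivWithin_eq_iteratedDeriv hU hP.contDiffAt hξI,
    congrFun (P.iteratedDeriv_eval n) ξ, eval_iterate_derivative_interpolate f hs,
    sub_eq_zero] at hξ0

theorem abs_divDiff_insert_sub_le (hI : I.OrdConnected) (hU : UniqueDiffOn ℝ I) {n : ℕ}
    {f : ℝ → ℝ} (hf : ContDiffOn ℝ (n + 1) f I) {M : ℝ}
    (hM : ∀ x ∈ I, |iteratedDerivWithin (n + 1) f I x| ≤ M) {u v : ℝ} {s : Finset ℝ}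
    (hs : #s = n) (huv : u ≠ v) (hu : u ∉ s) (hv : v ∉ s) (huI : u ∈ I) (hvI : v ∈ I)
    (hsI : ↑s ⊆ I) :
    |divDiff f (insert u s) - divDiff f (insert v s)| ≤ |u - v| * (M / (n + 1).factorial) := by
  have hu' : u ∉ insert v s := by simp [huv, hu]
  have hI_insert : ↑(insert u (insert v s)) ⊆ I := by
    simp [Set.insert_subset_iff, huI, hvI, hsI]
  obtain ⟨ξ, hξ, hξeq⟩ := hI.exists_iteratedDerivWithin_eq_factorial_mul_divDiff hU
    (by exact_mod_cast hf) (by rw [card_insert_of_notMem hu', card_insert_of_notMem hv, hs])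
    hI_insert
  have hξI : ξ ∈ I := hI.convex.convexHull_subset_iff.2 hI_insert hξ
  rw [divDiff_insert_sub_divDiff_insert f huv hu hv, abs_mul]
  gcongr
  have hpos : (0 : ℝ) < (n + 1).factorial := by positivity
  rw [le_div_iff₀ hpos, ← abs_of_pos hpos, ← abs_mul, mul_comm, ← hξeq]
  exact hM ξ hξI

end Set.OrdConnected

theorem abs_divDiff_image_sub_le {I : Set ℝ} (hI : I.OrdConnected) (hU : UniqueDiffOn ℝ I)
    {ι : Type*} [Fintype ι] [DecidableEq ι] {n : ℕ} {f : ℝ → ℝ}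
    (hf : ContDiffOn ℝ (n + 1) f I) {M : ℝ} (hM : ∀ x ∈ I, |iteratedDerivWithin (n + 1) f I x| ≤ M)
    (hι : Fintype.card ι = n + 1) {c y : ι → ℝ} (hc : Function.Injective c)
    (hy : Function.Injective y) (hcy : ∀ i j, c i ≠ y j) (hcI : ∀ i, c i ∈ I)
    (hyI : ∀ i, y i ∈ I) :
    |divDiff f (univ.image c) - divDiff f (univ.image y)| ≤
      (∑ i, |c i - y i|) * (M / (n + 1).factorial) := by
  have hinj (S : Finset ι) : Function.Injective (S.piecewise c y) := by
    intro i j hij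
    by_cases hi : i ∈ S <;> by_cases hj : j ∈ S <;>
      simp only [Finset.piecewise, hi, hj, if_true, if_false] at hij
    exacts [hc hij, (hcy i j hij).elim, (hcy j i hij.symm).elim, hy hij]
  have hI_piecewise (S : Finset ι) (i : ι) : S.piecewise c y i ∈ I := by
    by_cases hi : i ∈ S <;> simp [hi, hcI, hyI]
  have image_univ (g : ι → ℝ) (i : ι) :
      univ.image g = insert (g i) ((univ.erase i).image g) := by
    rw [← image_insert, insert_erase (mem_univ i)]
  suffices ∀ S : Finset ι,
      |divDiff f (univ.image (S.piecewise c y)) - divDiff f (univ.image y)| ≤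
        (∑ i ∈ S, |c i - y i|) * (M / (n + 1).factorial) by
    simpa using this univ
  intro S
  induction S using Finset.induction_on with
  | empty => simp
  | insert i S hi ih =>
    set a := S.piecewise c y
    set g := (insert i S).piecewise c y
    set B := (univ.erase i).image a
    have hgB : (univ.erase i).image g = B :=
      image_congr fun j hj => piecewise_insert_of_ne _ _ _ (ne_of_mem_erase hj)
    have hgi : g i = c i := piecewise_eq_of_mem _ _ _ (mem_insert_self i S)
    have hai : a i = y i := piecewise_eq_of_notMem _ _ _ hi
    have hcB : c i ∉ B := hgi ▸ hgB ▸ (hinj _).mem_finset_image.not.2 (notMem_erase i univ)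
    have hyB : y i ∉ B := hai ▸ (hinj S).mem_finset_image.not.2 (notMem_erase i univ)
    have hB : #B = n := by
      rw [card_image_of_injective _ (hinj S), card_erase_of_mem (mem_univ i), card_univ, hι,
        Nat.add_sub_cancel]
    have hBI : ↑B ⊆ I := by
      rw [coe_image]
      exact Set.image_subset_iff.2 fun j _ => hI_piecewise S j
    have hstep :=
      hI.abs_divDiff_insert_sub_le hU hf hM hB (hcy i i) hcB hyB (hcI i) (hyI i) hBI
    have hg_image : univ.image g = insert (c i) B := by rw [image_univ g i, hgi, hgB]
    have ha_image : univ.image a = insert (y i) B := by rw [image_univ a i, hai]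
    rw [← hg_image, ← ha_image] at hstep
    calc _ ≤ |divDiff f (univ.image g) - divDiff f (univ.image a)| +
          |divDiff f (univ.image a) - divDiff f (univ.image y)| := abs_sub_le _ _ _
      _ ≤ _ := by
        rw [sum_insert hi, add_mul]
        exact add_le_add hstep ih

theorem abs_iteratedDerivWithin_sub_factorial_mul_divDiff_le {I : Set ℝ} (hI : I.OrdConnected)
    {n : ℕ} {f : ℝ → ℝ} (hf : ContDiffOn ℝ (n + 1) f I) {M : ℝ}
    (hM : ∀ x ∈ I, |iteratedDerivWithin (n + 1) f I x| ≤ M) {y : Fin (n + 1) → ℝ}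
    (hy : Function.Injective y) (hyI : ∀ i, y i ∈ I) {x z : ℝ} (hx : x ∈ I) (hz : z ∈ I)
    (hzx : z ≠ x) {δ : ℝ} (hδ : 0 < δ) :
    |iteratedDerivWithin n f I x - n.factorial * divDiff f (univ.image y)| ≤
      (2 * δ + (∑ i, |x - y i|) / (n + 1)) * M := by
  have hU := hI.uniqueDiffOn hx hz hzx.symm
  have hM0 : 0 ≤ M := (abs_nonneg _).trans (hM x hx)
  set J := I ∩ Metric.closedBall x δ
  obtain ⟨t, htJ, ht⟩ := ((hI.infinite_inter_closedBall hx hz hzx hδ).sdiff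
    (Set.finite_range y)).exists_subset_card_eq (n + 1)
  set c := t.orderEmbOfFin ht
  have hcJ (i : Fin (n + 1)) : c i ∈ J \ Set.range y := htJ (t.orderEmbOfFin_mem ht i)
  have htJ' : ↑t ⊆ J := htJ.trans Set.sdiff_subset
  obtain ⟨η, hη, hηeq⟩ := hI.exists_iteratedDerivWithin_eq_factorial_mul_divDiff hU
    (hf.of_le (by norm_cast; omega)) ht (htJ'.trans Set.inter_subset_left)
  have hηJ : η ∈ J :=
    (hI.convex.inter (convex_closedBall x δ)).convexHull_subset_iff.2 htJ' hη
  have hchain := abs_divDiff_image_sub_le hI hU hf hM (Fintype.card_fin _) c.injective hy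
    (fun i j h => (hcJ i).2 ⟨j, h.symm⟩) (fun i => (hcJ i).1.1) hyI
  rw [image_orderEmbOfFin_univ] at hchain
  have hFη : |iteratedDerivWithin n f I x - iteratedDerivWithin n f I η| ≤ M * δ := by
    have hmvt := hI.convex.norm_image_sub_le_of_norm_derivWithin_le
      (hf.differentiableOn_iteratedDerivWithin (m := n) (by norm_cast; omega) hU)
      (fun t ht => by rw [← iteratedDerivWithin_succ]; exact hM t ht) hηJ.1 hx
    rw [Real.norm_eq_abs, Real.norm_eq_abs] at hmvt
    refine hmvt.trans (mul_le_mul_of_nonneg_left ?_ hM0)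
    rw [abs_sub_comm, ← Real.dist_eq]
    exact hηJ.2
  have hcy : ∑ i, |c i - y i| ≤ ∑ i, |x - y i| + (n + 1) * δ := by
    calc ∑ i, |c i - y i| ≤ ∑ i, (|x - y i| + δ) := sum_le_sum fun i _ =>
          (abs_sub_le _ x _).trans (by rw [add_comm, ← Real.dist_eq]; gcongr; exact (hcJ i).1.2)
      _ = ∑ i, |x - y i| + (n + 1) * δ := by
          rw [sum_add_distrib, sum_const, card_univ, Fintype.card_fin, nsmul_eq_mul]
          push_cast
          ring
  calc _ ≤ |iteratedDerivWithin n f I x - iteratedDerivWithin n f I η| +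
        |iteratedDerivWithin n f I η - n.factorial * divDiff f (univ.image y)| :=
        abs_sub_le _ _ _
    _ = |iteratedDerivWithin n f I x - iteratedDerivWithin n f I η| +
        n.factorial * |divDiff f t - divDiff f (univ.image y)| := by
        rw [hηeq, ← mul_sub, abs_mul, Nat.abs_cast]
    _ ≤ M * δ + n.factorial * ((∑ i, |x - y i| + (n + 1) * δ) * (M / (n + 1).factorial)) := by
        gcongr
        exact hchain.trans (by gcongr)
    _ = (2 * δ + (∑ i, |x - y i|) / (n + 1)) * M := by
        rw [Nat.factorial_succ]
        push_cast
        field_simp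
        ring

theorem lagrange_interpolation_deriv_bound (k : ℕ) (f : ℝ → ℝ) (I : Set ℝ)
    (hI : I.OrdConnected) (hf : ContDiffOn ℝ (k + 1) f I)
    (y : Fin (k + 1) → ℝ) (hy : StrictMono y) (hyI : ∀ i, y i ∈ I)
    (C M : ℝ)
    (hC : ∀ x ∈ I, |x - (∑ i, y i) / (k + 1)| ≤ C)
    (hM : ∀ x ∈ I, |iteratedDerivWithin (k + 1) f I x| ≤ M) :
    ∀ x ∈ I,
      |iteratedDerivWithin k f I x -
        ∑ i, (k.factorial : ℝ) * f (y i) / ∏ j ∈ Finset.univ.erase i, (y i - y j)| ≤ C * M := by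
  intro x hx
  have hM0 : 0 ≤ M := (abs_nonneg _).trans (hM x hx)
  simp_rw [mul_div_assoc, ← mul_sum, ← divDiff_image f hy.injective]
  by_cases hI_x : ∃ z ∈ I, z ≠ x
  swap
  · push Not at hI_x
    obtain rfl : 0 = k := by
      simpa [Fin.ext_iff] using
        hy.injective ((hI_x _ (hyI 0)).trans (hI_x _ (hyI (Fin.last k))).symm)
    simpa [divDiff, hI_x _ (hyI 0)] using mul_nonneg ((abs_nonneg _).trans (hC x hx)) hM0
  obtain ⟨z, hz, hzx⟩ := hI_x
  have hlim : Filter.Tendsto (fun δ : ℝ => (2 * δ + C) * M) (nhdsWithin 0 (Set.Ioi 0))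
      (nhds (C * M)) :=
    tendsto_nhdsWithin_of_tendsto_nhds (Continuous.tendsto' (by fun_prop) 0 _ (by simp))
  refine ge_of_tendsto hlim (eventually_nhdsWithin_of_forall fun δ hδ => ?_)
  refine (abs_iteratedDerivWithin_sub_factorial_mul_divDiff_le hI hf hM hy.injective hyI hx hz
    hzx hδ).trans ?_
  gcongr
  exact sum_abs_sub_div_le_of_abs_sub_mean_le hy.monotone hyI hC hx
end

section
/- Let h : [a,b] → ℝ be monotonic and suppose b − a is a positive integer multiple of π/n. Then |∫_a^b h(θ)·sin(2nθ) dθ| ≤ |h(b) − h(a)|/n. -/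
/-!
If `f` is antiperiodic with antiperiod `δ`, the two halves of a period `[x, x + 2δ]` pair up:
`∫ h f = ∫_x^{x+δ} (h t - h (t + δ)) f t`, and for monotone `h` the difference is bounded by the
increment of `h` over that period. Summing over the `k` periods telescopes to `|h b - h a|` times
`∫_a^{a+δ} |f|`, which for `f = sin (2 n ·)` and `δ = π / (2 n)` equals `1 / n`.
-/

open Function MeasureTheory Real Set intervalIntegral

lemma intervalIntegrable_mul_of_monotoneOn {f h : ℝ → ℝ} {s : Set ℝ} {a b : ℝ}
    (hh : MonotoneOn h s) (hab : a ≤ b) (hs : Icc a b ⊆ s) (hf : Continuous f) :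
    IntervalIntegrable (fun t => h t * f t) volume a b :=
  (hh.mono ((uIcc_of_le hab).trans_subset hs)).intervalIntegrable.mul_continuousOn hf.continuousOn

section Antiperiodic

variable {f h : ℝ → ℝ} {δ : ℝ}

lemma integral_mul_antiperiodic_eq (hf : Antiperiodic f δ) (hfc : Continuous f) (hδ : 0 ≤ δ)
    {x : ℝ} (hh : MonotoneOn h (Icc x (x + 2 * δ))) :
    ∫ t in x..x + 2 * δ, h t * f t = ∫ t in x..x + δ, (h t - h (t + δ)) * f t := by
  have hmid : x + 2 * δ = x + δ + δ := by ring
  rw [hmid] at hh ⊢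
  have hfirst : IntervalIntegrable (fun t => h t * f t) volume x (x + δ) :=
    intervalIntegrable_mul_of_monotoneOn hh (by linarith) (Icc_subset_Icc_right (by linarith)) hfc
  have hsecond : IntervalIntegrable (fun t => h t * f t) volume (x + δ) (x + δ + δ) :=
    intervalIntegrable_mul_of_monotoneOn hh (by linarith) (Icc_subset_Icc_left (by linarith)) hfc
  have hshifted : IntervalIntegrable (fun t => h (t + δ) * f (t + δ)) volume x (x + δ) := by
    simpa using hsecond.comp_add_right δ
  rw [← integral_add_adjacent_intervals hfirst hsecond, ← integral_comp_add_right,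
    ← integral_add hfirst hshifted]
  refine integral_congr fun t _ => ?_
  simp only [hf t]
  ring

lemma abs_integral_mul_antiperiodic_le_of_monotoneOn (hf : Antiperiodic f δ)
    (hfc : Continuous f) (hδ : 0 ≤ δ) {x : ℝ} (hh : MonotoneOn h (Icc x (x + 2 * δ))) :
    |∫ t in x..x + 2 * δ, h t * f t| ≤ (h (x + 2 * δ) - h x) * ∫ t in x..x + δ, |f t| := by
  rw [integral_mul_antiperiodic_eq hf hfc hδ hh, ← intervalIntegral.integral_const_mul,
    ← Real.norm_eq_abs]
  refine norm_integral_le_of_norm_le (by linarith) (ae_of_all _ fun t ht => ?_)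
    ((continuous_const.mul hfc.abs).intervalIntegrable _ _)
  have hx : x ∈ Icc x (x + 2 * δ) := ⟨le_rfl, by linarith⟩
  have ht₁ : t ∈ Icc x (x + 2 * δ) := ⟨ht.1.le, by linarith [ht.2]⟩
  have ht₂ : t + δ ∈ Icc x (x + 2 * δ) := ⟨by linarith [ht.1], by linarith [ht.2]⟩
  have hy : x + 2 * δ ∈ Icc x (x + 2 * δ) := ⟨by linarith, le_rfl⟩
  have h₁ := hh hx ht₁ ht.1.le
  have h₂ := hh ht₁ ht₂ (by linarith)
  have h₃ := hh ht₂ hy (by linarith [ht.2])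
  rw [Real.norm_eq_abs, abs_mul]
  exact mul_le_mul_of_nonneg_right (abs_sub_le_iff.mpr ⟨by linarith, by linarith⟩) (abs_nonneg _)

lemma abs_integral_mul_antiperiodic_le_of_monotoneOn_nat_mul (hf : Antiperiodic f δ)
    (hfc : Continuous f) (hδ : 0 ≤ δ) {a : ℝ} (k : ℕ)
    (hh : MonotoneOn h (Icc a (a + k * (2 * δ)))) :
    |∫ t in a..a + k * (2 * δ), h t * f t| ≤
      (h (a + k * (2 * δ)) - h a) * ∫ t in a..a + δ, |f t| := by
  induction k with
  | zero => simp
  | succ k ih =>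
    set x := a + k * (2 * δ)
    have hend : a + (k + 1 : ℕ) * (2 * δ) = x + 2 * δ := by push_cast; ring
    have hax : a ≤ x := le_add_of_nonneg_right (by positivity)
    rw [hend] at hh ⊢
    have hleft : MonotoneOn h (Icc a x) := hh.mono (Icc_subset_Icc_right (by linarith))
    have hright : MonotoneOn h (Icc x (x + 2 * δ)) := hh.mono (Icc_subset_Icc_left hax)
    have hperiod : ∫ t in x..x + δ, |f t| = ∫ t in a..a + δ, |f t| :=
      Periodic.intervalIntegral_add_eq (fun t => by rw [hf t, abs_neg]) x a
    calc |∫ t in a..x + 2 * δ, h t * f t|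
        = |(∫ t in a..x, h t * f t) + ∫ t in x..x + 2 * δ, h t * f t| := by
          rw [integral_add_adjacent_intervals
            (intervalIntegrable_mul_of_monotoneOn hleft hax subset_rfl hfc)
            (intervalIntegrable_mul_of_monotoneOn hright (by linarith) subset_rfl hfc)]
      _ ≤ |∫ t in a..x, h t * f t| + |∫ t in x..x + 2 * δ, h t * f t| := abs_add_le _ _
      _ ≤ (h x - h a) * (∫ t in a..a + δ, |f t|) +
            (h (x + 2 * δ) - h x) * ∫ t in a..a + δ, |f t| := by
          gcongr
          · exact ih hleft
          · rw [← hperiod]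
            exact abs_integral_mul_antiperiodic_le_of_monotoneOn hf hfc hδ hright
      _ = (h (x + 2 * δ) - h a) * ∫ t in a..a + δ, |f t| := by ring

lemma abs_integral_mul_antiperiodic_le (hf : Antiperiodic f δ) (hfc : Continuous f) (hδ : 0 ≤ δ)
    {a : ℝ} (k : ℕ)
    (hh : MonotoneOn h (Icc a (a + k * (2 * δ))) ∨ AntitoneOn h (Icc a (a + k * (2 * δ)))) :
    |∫ t in a..a + k * (2 * δ), h t * f t| ≤
      |h (a + k * (2 * δ)) - h a| * ∫ t in a..a + δ, |f t| := by
  have hI : 0 ≤ ∫ t in a..a + δ, |f t| :=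
    integral_nonneg (by linarith) fun _ _ => abs_nonneg _
  rcases hh with hh | hh
  · exact (abs_integral_mul_antiperiodic_le_of_monotoneOn_nat_mul hf hfc hδ k hh).trans
      (mul_le_mul_of_nonneg_right (le_abs_self _) hI)
  · have hneg := abs_integral_mul_antiperiodic_le_of_monotoneOn_nat_mul hf hfc hδ k hh.neg
    simp only [neg_mul, intervalIntegral.integral_neg, abs_neg, neg_sub_neg] at hneg
    exact hneg.trans (mul_le_mul_of_nonneg_right (abs_sub_comm (h _) (h a) ▸ le_abs_self _) hI)

end Antiperiodic

lemma antiperiodic_sin_const_mul (c : ℝ) : Antiperiodic (fun x => sin (c * x)) (π / c) := by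
  rcases eq_or_ne c 0 with rfl | hc
  · simp [Antiperiodic]
  · simpa [div_eq_inv_mul] using sin_antiperiodic.const_mul hc

lemma integral_abs_sin_zero_pi : ∫ t in 0..π, |sin t| = 2 := by
  rw [integral_congr fun t ht => abs_of_nonneg <|
    sin_nonneg_of_nonneg_of_le_pi (uIcc_of_le pi_pos.le ▸ ht).1 (uIcc_of_le pi_pos.le ▸ ht).2,
    integral_sin, cos_zero, cos_pi]
  norm_num

lemma integral_abs_sin_const_mul (a c : ℝ) : ∫ t in a..a + π / c, |sin (c * t)| = 2 / c := by
  rcases eq_or_ne c 0 with rfl | hc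
  · simp
  have hperiod : Periodic (fun t => |sin t|) π := fun t => by simp only [sin_add_pi, abs_neg]
  rw [intervalIntegral.integral_comp_mul_left (fun t => |sin t|) hc, mul_add, mul_div_cancel₀ _ hc,
    hperiod.intervalIntegral_add_eq (c * a) 0, zero_add, integral_abs_sin_zero_pi, smul_eq_mul,
    inv_mul_eq_div]

theorem monotone_sin_integral_bound_general (n : ℕ) (a b : ℝ) (h : ℝ → ℝ)
    (hmono : MonotoneOn h (Set.Icc a b) ∨ AntitoneOn h (Set.Icc a b))
    (k : ℕ) (hab : b - a = k * (Real.pi / n)) :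
    |∫ θ in a..b, h θ * Real.sin (2 * n * θ)| ≤ |h b - h a| / n := by
  obtain rfl : b = a + k * (2 * (π / (2 * n))) := by
    rw [mul_div_assoc', mul_div_mul_left _ _ two_ne_zero]
    linarith
  calc _ ≤ |h (a + k * (2 * (π / (2 * n)))) - h a| *
          ∫ θ in a..a + π / (2 * n), |sin (2 * n * θ)| :=
        abs_integral_mul_antiperiodic_le (antiperiodic_sin_const_mul _) (by fun_prop)
          (by positivity) k hmono
    _ = _ := by
        rw [integral_abs_sin_const_mul]
        ring

theorem monotone_sin_integral_bound (n : ℕ) (hn : 1 ≤ n) (a b : ℝ) (h : ℝ → ℝ)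
    (hmono : MonotoneOn h (Set.Icc a b) ∨ AntitoneOn h (Set.Icc a b))
    (k : ℕ) (hk : 1 ≤ k) (hab : b - a = k * (Real.pi / n)) :
    |∫ θ in a..b, h θ * Real.sin (2 * n * θ)| ≤ |h b - h a| / n :=
  monotone_sin_integral_bound_general n a b h hmono k hab
end

section
/- Let n ≥ 1 and let I = [aπ/n, bπ/n] with integers a < b. If θ₀ ∈ I, then 4/3 ≤ ∫_I sin(2n(θ−θ₀))/(θ−θ₀) dθ ≤ 4. -/
/-!
The substitution `t = 2n(θ - θ₀)` turns the integral into `∫_{-x}^{y} sinc = Si x + Si y` with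
`x, y ≥ 0` and `x + y = 2(b - a)π ≥ 2π`. The lobes of `sinc` between consecutive multiples of `π`
alternate in sign and decrease in area, so on `[0, ∞)` the sine integral `Si` lies between its
values at the two multiples of `π` surrounding the argument; hence `0 ≤ Si ≤ Si π` on `[0, ∞)`
and `Si 2π ≤ Si` on `[π, ∞)`. One of `x, y` is at least `π`, so it remains to show `Si π ≤ 2`
and `4/3 ≤ Si 2π`, which follow from Taylor bounds for `sin` on `[0, π]` and a chord bound for
`1/t` on `[π, 2π]`.
-/

open MeasureTheory intervalIntegral Real Set

lemma le_of_deriv_le_of_nonneg {f g : ℝ → ℝ} (hf : Differentiable ℝ f) (hg : Differentiable ℝ g)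
    (h₀ : f 0 ≤ g 0) (h : ∀ x, 0 ≤ x → deriv f x ≤ deriv g x) {x : ℝ} (hx : 0 ≤ x) :
    f x ≤ g x := by
  have hmono : MonotoneOn (g - f) (Ici 0) :=
    monotoneOn_of_deriv_nonneg (convex_Ici 0) (hg.sub hf).continuous.continuousOn
      (hg.sub hf).differentiableOn fun y hy => by
      rw [interior_Ici] at hy
      rw [deriv_sub (hg y) (hf y)]
      linarith [h y hy.le]
  have := hmono self_mem_Ici hx hx
  simp only [Pi.sub_apply] at this
  linarith

lemma Antitone.mem_Icc_of_alternating {s a : ℕ → ℝ} (ha : Antitone a) (ha₀ : ∀ m, 0 ≤ a m)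
    (hs : ∀ m, s (m + 1) = s m + (-1) ^ m * a m) (m : ℕ) : s m ∈ Icc (s 0) (s 1) := by
  have hup (k : ℕ) : s (2 * k + 1) = s (2 * k) + a (2 * k) := by simpa [pow_mul] using hs (2 * k)
  have hdown (k : ℕ) : s (2 * k + 2) = s (2 * k + 1) - a (2 * k + 1) := by
    simpa [pow_succ, pow_mul, sub_eq_add_neg] using hs (2 * k + 1)
  have hnested (j : ℕ) : s 0 ≤ s (2 * j) ∧ s (2 * j) ≤ s (2 * j + 1) ∧ s (2 * j + 1) ≤ s 1 := by
    induction j with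
    | zero => simpa [hup 0] using ha₀ 0
    | succ j ih =>
      rw [Nat.mul_succ]
      have hup' : s (2 * j + 2 + 1) = s (2 * j + 2) + a (2 * j + 2) := hup (j + 1)
      have := ha (show 2 * j ≤ 2 * j + 1 by omega)
      have := ha (show 2 * j + 1 ≤ 2 * j + 2 by omega)
      refine ⟨?_, ?_, ?_⟩ <;> linarith [hup j, hdown j, ha₀ (2 * j + 2)]
  obtain ⟨j, rfl | rfl⟩ := Nat.even_or_odd' m
  · exact ⟨(hnested j).1, (hnested j).2.1.trans (hnested j).2.2⟩
  · exact ⟨(hnested j).1.trans (hnested j).2.1, (hnested j).2.2⟩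

namespace Real

lemma cos_le_taylor_four {x : ℝ} (hx : 0 ≤ x) : cos x ≤ 1 - x ^ 2 / 2 + x ^ 4 / 24 :=
  le_of_deriv_le_of_nonneg (f := cos) (g := fun x => 1 - x ^ 2 / 2 + x ^ 4 / 24)
    (by fun_prop) (by fun_prop) (by simp)
    (fun y hy => by simp (disch := fun_prop); linarith [sin_ge_sub_cube hy]) hx

lemma sin_le_taylor_five {x : ℝ} (hx : 0 ≤ x) : sin x ≤ x - x ^ 3 / 6 + x ^ 5 / 120 :=
  le_of_deriv_le_of_nonneg (f := sin) (g := fun x => x - x ^ 3 / 6 + x ^ 5 / 120)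
    (by fun_prop) (by fun_prop) (by simp)
    (fun y hy => by simp (disch := fun_prop); linarith [cos_le_taylor_four hy]) hx

lemma taylor_six_le_cos {x : ℝ} (hx : 0 ≤ x) :
    1 - x ^ 2 / 2 + x ^ 4 / 24 - x ^ 6 / 720 ≤ cos x :=
  le_of_deriv_le_of_nonneg (f := fun x => 1 - x ^ 2 / 2 + x ^ 4 / 24 - x ^ 6 / 720) (g := cos)
    (by fun_prop) (by fun_prop) (by simp)
    (fun y hy => by simp (disch := fun_prop); linarith [sin_le_taylor_five hy]) hx

lemma taylor_seven_le_sin {x : ℝ} (hx : 0 ≤ x) :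
    x - x ^ 3 / 6 + x ^ 5 / 120 - x ^ 7 / 5040 ≤ sin x :=
  le_of_deriv_le_of_nonneg (f := fun x => x - x ^ 3 / 6 + x ^ 5 / 120 - x ^ 7 / 5040) (g := sin)
    (by fun_prop) (by fun_prop) (by simp)
    (fun y hy => by simp (disch := fun_prop); linarith [taylor_six_le_cos hy]) hx

lemma sinc_le_taylor_four {x : ℝ} (hx : 0 ≤ x) : sinc x ≤ 1 - x ^ 2 / 6 + x ^ 4 / 120 := by
  rcases hx.eq_or_lt with rfl | hx
  · simp
  rw [sinc_of_ne_zero hx.ne', div_le_iff₀ hx]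
  linarith [sin_le_taylor_five hx.le]

lemma taylor_six_le_sinc {x : ℝ} (hx : 0 ≤ x) :
    1 - x ^ 2 / 6 + x ^ 4 / 120 - x ^ 6 / 5040 ≤ sinc x := by
  rcases hx.eq_or_lt with rfl | hx
  · simp
  rw [sinc_of_ne_zero hx.ne', le_div_iff₀ hx]
  linarith [taylor_seven_le_sin hx.le]

noncomputable def sineIntegral (x : ℝ) : ℝ := ∫ t in 0..x, sinc t

lemma intervalIntegrable_sinc (a b : ℝ) : IntervalIntegrable sinc volume a b :=
  continuous_sinc.intervalIntegrable a b

lemma integral_sinc (a b : ℝ) : ∫ t in a..b, sinc t = sineIntegral b - sineIntegral a :=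
  (integral_interval_sub_left (intervalIntegrable_sinc 0 b) (intervalIntegrable_sinc 0 a)).symm

lemma sineIntegral_neg (x : ℝ) : sineIntegral (-x) = -sineIntegral x := by
  have := integral_comp_neg (a := 0) (b := x) sinc
  simp only [sinc_neg, neg_zero] at this
  rw [sineIntegral, sineIntegral, this, integral_symm]

lemma sineIntegral_pi_le : sineIntegral π ≤ π - π ^ 3 / 18 + π ^ 5 / 600 := by
  have hpoly : ∫ x in 0..π, (1 - x ^ 2 / 6 + x ^ 4 / 120) = π - π ^ 3 / 18 + π ^ 5 / 600 := by
    rw [integral_deriv_eq_sub' (fun x => x - x ^ 3 / 18 + x ^ 5 / 600)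
      (by ext; simp (disch := fun_prop); ring) (fun _ _ => by fun_prop) (by fun_prop)]
    ring
  rw [← hpoly, sineIntegral]
  exact integral_mono_on pi_pos.le (intervalIntegrable_sinc 0 π)
    (Continuous.intervalIntegrable (by fun_prop) _ _) fun x hx => sinc_le_taylor_four hx.1

lemma le_sineIntegral_pi : π - π ^ 3 / 18 + π ^ 5 / 600 - π ^ 7 / 35280 ≤ sineIntegral π := by
  have hpoly : ∫ x in 0..π, (1 - x ^ 2 / 6 + x ^ 4 / 120 - x ^ 6 / 5040) =
      π - π ^ 3 / 18 + π ^ 5 / 600 - π ^ 7 / 35280 := by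
    rw [integral_deriv_eq_sub' (fun x => x - x ^ 3 / 18 + x ^ 5 / 600 - x ^ 7 / 35280)
      (by ext; simp (disch := fun_prop); ring) (fun _ _ => by fun_prop) (by fun_prop)]
    ring
  rw [← hpoly, sineIntegral]
  exact integral_mono_on pi_pos.le (Continuous.intervalIntegrable (by fun_prop) _ _)
    (intervalIntegrable_sinc 0 π) fun x hx => taylor_six_le_sinc hx.1

lemma neg_one_pow_mul_sinc_nonneg {m : ℕ} {t : ℝ} (h₁ : m * π ≤ t) (h₂ : t ≤ (m + 1) * π) :
    0 ≤ (-1) ^ m * sinc t := by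
  rcases (show (0 : ℝ) ≤ m * π by positivity).trans h₁ |>.eq_or_lt with rfl | ht
  · obtain rfl : m = 0 := by
      exact_mod_cast (nonpos_of_mul_nonpos_left h₁ pi_pos).antisymm m.cast_nonneg
    simp
  have hsin : sin t = (-1) ^ m * sin (t - m * π) := by
    rw [← sin_add_nat_mul_pi, sub_add_cancel]
  rw [sinc_of_ne_zero ht.ne', hsin, ← mul_div_assoc, ← mul_assoc, ← pow_add, ← two_mul, pow_mul,
    neg_one_sq, one_pow, one_mul]
  exact div_nonneg (sin_nonneg_of_nonneg_of_le_pi (by linarith) (by linarith)) ht.le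

noncomputable def sincLobe (m : ℕ) : ℝ := ∫ t in m * π..(m + 1) * π, |sinc t|

lemma sincLobe_nonneg (m : ℕ) : 0 ≤ sincLobe m :=
  integral_nonneg (by nlinarith [pi_pos]) fun _ _ => abs_nonneg _

lemma integral_sinc_nat_mul_pi (m : ℕ) :
    ∫ t in m * π..(m + 1) * π, sinc t = (-1) ^ m * sincLobe m := by
  rw [sincLobe, ← intervalIntegral.integral_const_mul]
  refine integral_congr fun t ht => ?_
  rw [uIcc_of_le (by nlinarith [pi_pos])] at ht
  have hsign := neg_one_pow_mul_sinc_nonneg ht.1 ht.2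
  have habs : |sinc t| = (-1) ^ m * sinc t := by
    rw [← abs_of_nonneg hsign, abs_mul, abs_pow, abs_neg, abs_one, one_pow, one_mul]
  rw [habs, ← mul_assoc, ← pow_add, ← two_mul, pow_mul, neg_one_sq, one_pow, one_mul]

lemma sincLobe_antitone : Antitone sincLobe := by
  refine antitone_nat_of_succ_le fun m => ?_
  have hshift := integral_comp_add_right (a := m * π) (b := (m + 1) * π) (fun t => |sinc t|) π
  rw [add_mul, one_mul] at hshift
  rw [sincLobe, sincLobe, Nat.cast_succ, show ((m : ℝ) + 1 + 1) * π = m * π + π + π by ring,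
    show ((m : ℝ) + 1) * π = m * π + π by ring, ← hshift]
  refine integral_mono_on (by nlinarith [pi_pos]) (Continuous.intervalIntegrable (by fun_prop) _ _)
    (Continuous.intervalIntegrable (by fun_prop) _ _) fun t ht => ?_
  rcases (show (0 : ℝ) ≤ m * π by positivity).trans ht.1 |>.eq_or_lt with rfl | ht0
  · simpa using abs_sinc_le_one π
  have htπ : 0 < t + π := by linarith [pi_pos]
  rw [sinc_of_ne_zero ht0.ne', sinc_of_ne_zero htπ.ne', sin_add_pi, abs_div, abs_div, abs_neg,
    abs_of_pos ht0, abs_of_pos htπ]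
  exact div_le_div_of_nonneg_left (abs_nonneg _) ht0 (by linarith [pi_pos])

lemma sineIntegral_succ_mul_pi (m : ℕ) :
    sineIntegral ((m + 1) * π) = sineIntegral (m * π) + (-1) ^ m * sincLobe m := by
  rw [← integral_sinc_nat_mul_pi, integral_sinc]
  ring

lemma sineIntegral_nat_mul_pi_mem_Icc (m : ℕ) :
    sineIntegral (m * π) ∈ Icc 0 (sineIntegral π) := by
  have h := sincLobe_antitone.mem_Icc_of_alternating sincLobe_nonneg
    (s := fun m => sineIntegral (m * π)) (by exact_mod_cast sineIntegral_succ_mul_pi) m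
  simpa [sineIntegral] using h

lemma sineIntegral_nat_mul_pi_mem_Icc_of_one_le {m : ℕ} (hm : 1 ≤ m) :
    sineIntegral (m * π) ∈ Icc (sineIntegral (2 * π)) (sineIntegral π) := by
  rcases hm.eq_or_lt with rfl | hm
  · have := sineIntegral_succ_mul_pi 1
    simp only [Nat.cast_one, one_mul, one_add_one_eq_two, pow_one, neg_one_mul] at this ⊢
    exact ⟨by linarith [sincLobe_nonneg 1], le_rfl⟩
  obtain ⟨k, rfl⟩ := Nat.exists_eq_add_of_le' hm
  have hshift := Antitone.mem_Icc_of_alternating (s := fun k => sineIntegral ((k + 2 : ℕ) * π))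
    (fun _ _ h => sincLobe_antitone (by omega)) (fun k => sincLobe_nonneg (k + 2))
    (fun k => by
      have h := sineIntegral_succ_mul_pi (k + 2)
      rwa [pow_add, neg_one_sq, mul_one, ← Nat.cast_succ] at h) k
  have h₃ := (sineIntegral_nat_mul_pi_mem_Icc 3).2
  push_cast at hshift h₃ ⊢
  exact ⟨hshift.1, hshift.2.trans h₃⟩

lemma sineIntegral_mem_uIcc {x : ℝ} (hx : 0 ≤ x) :
    sineIntegral x ∈ uIcc (sineIntegral (⌊x / π⌋₊ * π)) (sineIntegral ((⌊x / π⌋₊ + 1) * π)) := by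
  set m := ⌊x / π⌋₊
  have hm₁ : m * π ≤ x := (le_div_iff₀ pi_pos).mp (Nat.floor_le (by positivity))
  have hm₂ : x ≤ (m + 1) * π := (div_le_iff₀ pi_pos).mp (Nat.lt_floor_add_one _).le
  have hsign : ∀ t ∈ Icc (m * π) ((m + 1) * π), 0 ≤ (-1) ^ m * sinc t :=
    fun t ht => neg_one_pow_mul_sinc_nonneg ht.1 ht.2
  have h₁ : 0 ≤ (-1) ^ m * (sineIntegral x - sineIntegral (m * π)) := by
    rw [← integral_sinc, ← intervalIntegral.integral_const_mul]
    exact integral_nonneg hm₁ fun t ht => hsign t ⟨ht.1, ht.2.trans hm₂⟩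
  have h₂ : 0 ≤ (-1) ^ m * (sineIntegral ((m + 1) * π) - sineIntegral x) := by
    rw [← integral_sinc, ← intervalIntegral.integral_const_mul]
    exact integral_nonneg hm₂ fun t ht => hsign t ⟨hm₁.trans ht.1, ht.2⟩
  rcases neg_one_pow_eq_or ℝ m with h | h <;> rw [h] at h₁ h₂
  · rw [uIcc_of_le (by linarith)]
    constructor <;> linarith
  · rw [uIcc_of_ge (by linarith)]
    constructor <;> linarith

lemma sineIntegral_mem_Icc {x : ℝ} (hx : 0 ≤ x) : sineIntegral x ∈ Icc 0 (sineIntegral π) :=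
  uIcc_subset_Icc (sineIntegral_nat_mul_pi_mem_Icc _)
    (by exact_mod_cast sineIntegral_nat_mul_pi_mem_Icc (⌊x / π⌋₊ + 1)) (sineIntegral_mem_uIcc hx)

lemma sineIntegral_two_pi_le {x : ℝ} (hx : π ≤ x) : sineIntegral (2 * π) ≤ sineIntegral x := by
  have hm : 1 ≤ ⌊x / π⌋₊ := Nat.le_floor (by rw [Nat.cast_one, le_div_iff₀ pi_pos]; linarith)
  exact (uIcc_subset_Icc (sineIntegral_nat_mul_pi_mem_Icc_of_one_le hm)
    (by exact_mod_cast sineIntegral_nat_mul_pi_mem_Icc_of_one_le (Nat.le_succ_of_le hm))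
    (sineIntegral_mem_uIcc (pi_pos.le.trans hx))).1

lemma neg_three_div_two_pi_le_integral_sinc : -(3 / (2 * π)) ≤ ∫ t in π..2 * π, sinc t := by
  have hπ := pi_pos
  have hchord : ∫ t in π..2 * π, sin t * (3 / (2 * π) - t / (2 * π ^ 2)) = -(3 / (2 * π)) := by
    rw [integral_deriv_eq_sub'
      (fun t => -cos t * (3 / (2 * π) - t / (2 * π ^ 2)) - sin t / (2 * π ^ 2))
      (by ext; simp (disch := fun_prop); ring) (fun _ _ => by fun_prop) (by fun_prop)]
    rw [cos_pi, sin_pi, cos_two_pi, sin_two_pi]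
    field_simp
    ring
  rw [← hchord]
  refine integral_mono_on (by linarith) (Continuous.intervalIntegrable (by fun_prop) _ _)
    (intervalIntegrable_sinc _ _) fun t ht => ?_
  have ht₀ : 0 < t := hπ.trans_le ht.1
  -- the chord of the convex function `t⁻¹` over `[π, 2 * π]`
  have hinv : t⁻¹ ≤ 3 / (2 * π) - t / (2 * π ^ 2) := by
    have : 3 / (2 * π) - t / (2 * π ^ 2) - t⁻¹ = (t - π) * (2 * π - t) / (2 * π ^ 2 * t) := by
      field_simp
      ring
    linarith [div_nonneg (mul_nonneg (sub_nonneg.2 ht.1) (sub_nonneg.2 ht.2))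
      (by positivity : (0 : ℝ) ≤ 2 * π ^ 2 * t)]
  rw [sinc_of_ne_zero ht₀.ne', div_eq_mul_inv]
  have hsin : sin t ≤ 0 := by
    rw [← sin_sub_two_pi]
    exact sin_nonpos_of_nonpos_of_neg_pi_le (by linarith [ht.2]) (by linarith [ht.1])
  exact mul_le_mul_of_nonpos_left hinv hsin

lemma sineIntegral_pi_le_two : sineIntegral π ≤ 2 := by
  have h₁ : π < 3.15 := pi_lt_d2
  have h₂ : (3.14 : ℝ) < π := pi_gt_d2
  have h₃ : (3.14 : ℝ) ^ 3 < π ^ 3 := by gcongr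
  have h₅ : π ^ 5 < (3.15 : ℝ) ^ 5 := by gcongr
  linarith [sineIntegral_pi_le]

lemma four_thirds_le_sineIntegral_two_pi : 4 / 3 ≤ sineIntegral (2 * π) := by
  have h₁ : π < 3.15 := pi_lt_d2
  have h₂ : (3.14 : ℝ) < π := pi_gt_d2
  have h₃ : π ^ 3 < (3.15 : ℝ) ^ 3 := by gcongr
  have h₅ : (3.14 : ℝ) ^ 5 < π ^ 5 := by gcongr
  have h₇ : π ^ 7 < (3.15 : ℝ) ^ 7 := by gcongr
  have hinv : 3 / (2 * π) < 3 / (2 * 3.14) := by gcongr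
  have := integral_sinc π (2 * π)
  linarith [le_sineIntegral_pi, neg_three_div_two_pi_le_integral_sinc]

lemma integral_sinc_mem_Icc {x y : ℝ} (hx : 0 ≤ x) (hy : 0 ≤ y) (hxy : 2 * π ≤ x + y) :
    ∫ t in -x..y, sinc t ∈ Icc (4 / 3) 4 := by
  rw [integral_sinc, sineIntegral_neg, sub_neg_eq_add]
  have hSx := sineIntegral_mem_Icc hx
  have hSy := sineIntegral_mem_Icc hy
  have htwo := sineIntegral_pi_le_two
  refine ⟨?_, by linarith [hSx.2, hSy.2]⟩
  rcases le_total π x with hπx | hπx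
  · linarith [sineIntegral_two_pi_le hπx, four_thirds_le_sineIntegral_two_pi, hSy.1]
  · linarith [sineIntegral_two_pi_le (show π ≤ y by linarith),
      four_thirds_le_sineIntegral_two_pi, hSx.1]

end Real

open Real in
lemma integral_sin_mul_sub_div_sub {c : ℝ} (hc : c ≠ 0) (θ₀ A B : ℝ) :
    ∫ θ in A..B, sin (c * (θ - θ₀)) / (θ - θ₀) = ∫ t in c * (A - θ₀)..c * (B - θ₀), sinc t := by
  have hae : ∀ᵐ θ, θ ∈ uIoc A B → sin (c * (θ - θ₀)) / (θ - θ₀) = c * sinc (c * θ - c * θ₀) := by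
    filter_upwards [Measure.ae_ne volume θ₀] with θ hθ _
    have hsub : θ - θ₀ ≠ 0 := sub_ne_zero.2 hθ
    rw [← mul_sub, sinc_of_ne_zero (mul_ne_zero hc hsub)]
    field_simp
  rw [integral_congr_ae hae, intervalIntegral.integral_const_mul, integral_comp_mul_sub sinc hc,
    smul_eq_mul, mul_inv_cancel_left₀ hc, mul_sub, mul_sub]

theorem sine_integral_in (n : ℕ) (hn : 1 ≤ n) (a b : ℤ) (hab : a < b) (θ₀ : ℝ)
    (hθ₀ : θ₀ ∈ Set.Icc (a * Real.pi / n) (b * Real.pi / n)) :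
    (4 : ℝ) / 3 ≤ (∫ θ in (a * Real.pi / n)..(b * Real.pi / n),
        Real.sin (2 * n * (θ - θ₀)) / (θ - θ₀)) ∧
    (∫ θ in (a * Real.pi / n)..(b * Real.pi / n),
        Real.sin (2 * n * (θ - θ₀)) / (θ - θ₀)) ≤ 4 := by
  have hn₀ : (0 : ℝ) < n := by exact_mod_cast hn
  have hab' : (a : ℝ) + 1 ≤ b := by exact_mod_cast hab
  obtain ⟨hθa, hθb⟩ := hθ₀
  rw [div_le_iff₀ hn₀] at hθa
  rw [le_div_iff₀ hn₀] at hθb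
  have hlo : 2 * n * (a * π / n - θ₀) = -(2 * n * θ₀ - 2 * a * π) := by field_simp; ring
  have hhi : 2 * n * (b * π / n - θ₀) = 2 * b * π - 2 * n * θ₀ := by field_simp
  rw [integral_sin_mul_sub_div_sub (by positivity), hlo, hhi]
  exact integral_sinc_mem_Icc (by linarith) (by linarith) (by nlinarith [pi_pos])
end

section
/- Let t be an odd nonnegative integer, set T = 2^{t+10}, and define H(x) = e^{ix}·2^{−(t+1)/2}·P_t(e^{ix/T}) + e^{2ix}·2^{−(t+1)/2}·Q_t(e^{ix/T}), where P_t, Q_t are the Rudin–Shapiro polynomials. Then Re(H(0)) = 1 and Re(H(Tπ)) = 1; moreover, if |x| ≤ 1/8 or |x − Tπ| ≤ 1/8, then Re(H(x)) ≥ 1/2. -/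
noncomputable def RS : ℕ → (ℂ → ℂ) × (ℂ → ℂ)
  | 0 => (fun _ => 1, fun _ => 1)
  | t + 1 => (fun z => (RS t).1 z + z ^ (2 ^ t) * (RS t).2 z,
              fun z => (RS t).1 z - z ^ (2 ^ t) * (RS t).2 z)

/-!
Write `t = 2s + 1`. At `x = 0` and `x = Tπ` both `e^{ix}` and `e^{2ix}` equal `1`, while
`e^{ix/T} = ±1`, where `(P_t, Q_t)` takes the value `(2^{s+1}, 0)`, resp. `(0, 2^{s+1})`.
Hence `H = 1` at both points, and it suffices to show that `H` is `4`-Lipschitz.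

On the unit circle the recursion `(P, Q) ↦ (P + z^{2^t} Q, P - z^{2^t} Q)` is a parallelogram
step, so `|P_t|² + |Q_t|² = 2^{t+1}`. Applied to the increments
`ΔP_t = P_t(e^{ia}) - P_t(e^{ib})` it gives
`|ΔP_{t+1}|² + |ΔQ_{t+1}|² ≤ 4 (|ΔP_t|² + |ΔQ_t|²) + 4·4^t (a - b)² |Q_t|²`,
whence `|ΔP_t|² + |ΔQ_t|² ≤ 2·8^t (a - b)²`. After the normalisation `2^{-(s+1)}`, the slowly
varying factors `P_t(e^{ix/T})`, `Q_t(e^{ix/T})` contribute `4^{s+1} / T ≤ 1` to the Lipschitz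
constant of `H`, and the fast factors `e^{ix}`, `e^{2ix}` contribute `1 + 2`.
-/

open Complex

lemma norm_mul_sub_mul_le {R : Type*} [SeminormedRing R] (u v u' v' : R) :
    ‖u * v - u' * v'‖ ≤ ‖u‖ * ‖v - v'‖ + ‖u - u'‖ * ‖v'‖ :=
  calc ‖u * v - u' * v'‖ = ‖u * (v - v') + (u - u') * v'‖ := by noncomm_ring
    _ ≤ ‖u‖ * ‖v - v'‖ + ‖u - u'‖ * ‖v'‖ :=
      (norm_add_le _ _).trans (add_le_add (norm_mul_le _ _) (norm_mul_le _ _))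

lemma le_and_le_of_sq_add_sq_le {a b c : ℝ} (hc : 0 ≤ c) (h : a ^ 2 + b ^ 2 ≤ c ^ 2) :
    a ≤ c ∧ b ≤ c :=
  ⟨le_of_sq_le_sq ((le_add_of_nonneg_right (sq_nonneg b)).trans h) hc,
    le_of_sq_le_sq ((le_add_of_nonneg_left (sq_nonneg a)).trans h) hc⟩

lemma Complex.sub_le_re_of_norm_sub_le {z w : ℂ} {r : ℝ} (h : ‖z - w‖ ≤ r) :
    w.re - r ≤ z.re := by
  have := (abs_le.1 ((abs_re_le_norm (z - w)).trans h)).1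
  rw [sub_re] at this
  linarith

lemma Complex.norm_exp_I_mul_ofReal_sub_le (a b : ℝ) :
    ‖exp (I * a) - exp (I * b)‖ ≤ |a - b| := by
  have : exp (I * a) - exp (I * b) = exp (I * b) * (exp (I * ↑(a - b)) - 1) := by
    rw [mul_sub, ← exp_add]; push_cast; ring_nf
  rw [this, norm_mul, norm_exp_I_mul_ofReal, one_mul]
  exact Real.norm_exp_I_mul_ofReal_sub_one_le

lemma Complex.norm_exp_I_mul_ofReal_pow_sub_le (n : ℕ) (a b : ℝ) :
    ‖exp (I * a) ^ n - exp (I * b) ^ n‖ ≤ n * |a - b| := by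
  simp only [← exp_nat_mul, show ∀ x : ℝ, (n : ℂ) * (I * x) = I * ↑(n * x) from
    fun x => by push_cast; ring]
  refine (norm_exp_I_mul_ofReal_sub_le _ _).trans_eq ?_
  rw [← mul_sub, abs_mul, Nat.abs_cast]

namespace RS

lemma fst_succ (t : ℕ) (z : ℂ) :
    (RS (t + 1)).1 z = (RS t).1 z + z ^ 2 ^ t * (RS t).2 z := rfl

lemma snd_succ (t : ℕ) (z : ℂ) :
    (RS (t + 1)).2 z = (RS t).1 z - z ^ 2 ^ t * (RS t).2 z := rfl

theorem norm_sq_add_norm_sq {z : ℂ} (hz : ‖z‖ = 1) (t : ℕ) :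
    ‖(RS t).1 z‖ ^ 2 + ‖(RS t).2 z‖ ^ 2 = 2 ^ (t + 1) := by
  induction t with
  | zero => norm_num [RS]
  | succ t ih =>
    rw [fst_succ, snd_succ, parallelogram_law_with_norm ℝ, norm_mul, norm_pow, hz, one_pow,
      one_mul, ih, pow_succ 2 (t + 1), mul_comm]

theorem norm_sub_sq_add_norm_sub_sq_le (t : ℕ) (a b : ℝ) :
    ‖(RS t).1 (exp (I * a)) - (RS t).1 (exp (I * b))‖ ^ 2
      + ‖(RS t).2 (exp (I * a)) - (RS t).2 (exp (I * b))‖ ^ 2 ≤ 2 * 8 ^ t * (a - b) ^ 2 := by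
  induction t with
  | zero => simpa [RS] using sq_nonneg (a - b)
  | succ t ih =>
    set za := exp (I * a)
    set zb := exp (I * b)
    set ΔP := (RS t).1 za - (RS t).1 zb
    set ΔQ := (RS t).2 za - (RS t).2 zb
    set ΔX := za ^ 2 ^ t * (RS t).2 za - zb ^ 2 ^ t * (RS t).2 zb
    have hX : ‖ΔX‖ ≤ ‖ΔQ‖ + 2 ^ t * |a - b| * ‖(RS t).2 zb‖ := by
      refine (norm_mul_sub_mul_le _ _ _ _).trans ?_
      rw [norm_pow, norm_exp_I_mul_ofReal, one_pow, one_mul]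
      gcongr
      exact_mod_cast norm_exp_I_mul_ofReal_pow_sub_le (2 ^ t) a b
    set ε := 2 ^ t * |a - b| * ‖(RS t).2 zb‖
    have hQb : ‖(RS t).2 zb‖ ^ 2 ≤ 2 * 2 ^ t :=
      (le_add_of_nonneg_left (sq_nonneg _)).trans_eq
        ((norm_sq_add_norm_sq (norm_exp_I_mul_ofReal b) t).trans (pow_succ' 2 t))
    have hε : ε ^ 2 ≤ 2 * 8 ^ t * (a - b) ^ 2 := by
      have h8 : (8 : ℝ) ^ t = (2 ^ t) ^ 2 * 2 ^ t := by
        rw [← pow_mul, ← pow_add, show (8 : ℝ) = 2 ^ 3 by norm_num, ← pow_mul]; ring_nf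
      rw [mul_pow, mul_pow, sq_abs, h8]
      linarith [mul_le_mul_of_nonneg_left hQb (by positivity : (0 : ℝ) ≤ (2 ^ t) ^ 2 * (a - b) ^ 2)]
    have hX2 : ‖ΔX‖ ^ 2 ≤ 2 * ‖ΔQ‖ ^ 2 + 2 * ε ^ 2 := by
      nlinarith [norm_nonneg ΔX, sq_nonneg (‖ΔQ‖ - ε)]
    have hΔP_succ : (RS (t + 1)).1 za - (RS (t + 1)).1 zb = ΔP + ΔX := by
      simp only [fst_succ, ΔP, ΔX]; ring
    have hΔQ_succ : (RS (t + 1)).2 za - (RS (t + 1)).2 zb = ΔP - ΔX := by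
      simp only [snd_succ, ΔP, ΔX]; ring
    rw [hΔP_succ, hΔQ_succ, parallelogram_law_with_norm ℝ, pow_succ' (8 : ℝ) t]
    linarith [sq_nonneg ‖ΔP‖]

theorem add_two_of_pow_eq_one {t : ℕ} {z : ℂ} (hz : z ^ 2 ^ t = 1) :
    (RS (t + 2)).1 z = 2 * (RS t).1 z ∧ (RS (t + 2)).2 z = 2 * (RS t).2 z := by
  have hz' : z ^ 2 ^ (t + 1) = 1 := by rw [pow_succ, pow_mul, hz, one_pow]
  simp only [fst_succ, snd_succ, hz, hz']
  constructor <;> ring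

theorem odd_apply_one (s : ℕ) :
    (RS (2 * s + 1)).1 1 = 2 ^ (s + 1) ∧ (RS (2 * s + 1)).2 1 = 0 := by
  induction s with
  | zero => norm_num [RS]
  | succ s ih =>
    obtain ⟨hP, hQ⟩ := add_two_of_pow_eq_one (t := 2 * s + 1) (one_pow _)
    rw [show 2 * (s + 1) + 1 = 2 * s + 1 + 2 by ring, hP, hQ, ih.1, ih.2]
    constructor <;> ring

theorem odd_apply_neg_one (s : ℕ) :
    (RS (2 * s + 1)).1 (-1) = 0 ∧ (RS (2 * s + 1)).2 (-1) = 2 ^ (s + 1) := by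
  induction s with
  | zero => norm_num [RS]
  | succ s ih =>
    obtain ⟨hP, hQ⟩ := add_two_of_pow_eq_one (t := 2 * s + 1) (z := -1)
      (Nat.even_pow.2 ⟨even_two, by omega⟩).neg_one_pow
    rw [show 2 * (s + 1) + 1 = 2 * s + 1 + 2 by ring, hP, hQ, ih.1, ih.2]
    constructor <;> ring

theorem norm_odd_le {z : ℂ} (hz : ‖z‖ = 1) (s : ℕ) :
    ‖(RS (2 * s + 1)).1 z‖ ≤ 2 ^ (s + 1) ∧ ‖(RS (2 * s + 1)).2 z‖ ≤ 2 ^ (s + 1) :=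
  le_and_le_of_sq_add_sq_le (by positivity) ((norm_sq_add_norm_sq hz _).le.trans_eq (by ring))

theorem norm_odd_sub_le (s : ℕ) (a b : ℝ) :
    ‖(RS (2 * s + 1)).1 (exp (I * a)) - (RS (2 * s + 1)).1 (exp (I * b))‖ ≤ 4 * 8 ^ s * |a - b| ∧
    ‖(RS (2 * s + 1)).2 (exp (I * a)) - (RS (2 * s + 1)).2 (exp (I * b))‖
      ≤ 4 * 8 ^ s * |a - b| :=
  le_and_le_of_sq_add_sq_le (by positivity)
    ((norm_sub_sq_add_norm_sub_sq_le (2 * s + 1) a b).trans_eq (by rw [mul_pow, sq_abs]; ring))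

end RS

/-- `H` for `t = 2s + 1`, with the normalising factor `2^{-(t+1)/2}` written as `2^{-(s+1)}`. -/
noncomputable def rsWave (s T : ℕ) (x : ℝ) : ℂ :=
  (2 ^ (s + 1) : ℂ)⁻¹ * (exp (I * x) * (RS (2 * s + 1)).1 (exp (I * ↑(x / T)))
    + exp (I * ↑(2 * x)) * (RS (2 * s + 1)).2 (exp (I * ↑(x / T))))

theorem rsWave_eq (s T : ℕ) (x : ℝ) :
    rsWave s T x = exp (I * x) * ((2 : ℂ) ^ ((((2 * s + 1 : ℕ) : ℂ) + 1) / 2))⁻¹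
          * (RS (2 * s + 1)).1 (exp (I * (x / T)))
        + exp (2 * I * x) * ((2 : ℂ) ^ ((((2 * s + 1 : ℕ) : ℂ) + 1) / 2))⁻¹
          * (RS (2 * s + 1)).2 (exp (I * (x / T))) := by
  have hc : (2 : ℂ) ^ ((((2 * s + 1 : ℕ) : ℂ) + 1) / 2) = 2 ^ (s + 1) := by
    rw [show (((2 * s + 1 : ℕ) : ℂ) + 1) / 2 = ((s + 1 : ℕ) : ℂ) by push_cast; ring, cpow_natCast]
  rw [rsWave, hc, show I * ↑(2 * x) = 2 * I * x by push_cast; ring, ofReal_div, ofReal_natCast]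
  ring

theorem rsWave_zero (s T : ℕ) : rsWave s T 0 = 1 := by
  simp only [rsWave, ofReal_zero, mul_zero, zero_div, exp_zero, one_mul,
    (RS.odd_apply_one s).1, (RS.odd_apply_one s).2, add_zero]
  exact inv_mul_cancel₀ (pow_ne_zero _ two_ne_zero)

theorem rsWave_natCast_mul_pi (s : ℕ) {T : ℕ} (hT : Even T) (hT0 : T ≠ 0) :
    rsWave s T (T * Real.pi) = 1 := by
  have hexp (n : ℕ) (hn : Even n) : exp (I * ↑(n * Real.pi)) = 1 := by
    rw [show I * ↑(n * Real.pi) = n * (Real.pi * I) by push_cast; ring, exp_nat_mul,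
      exp_pi_mul_I, hn.neg_one_pow]
  have hTπ : (T : ℝ) * Real.pi / T = Real.pi := mul_div_cancel_left₀ _ (Nat.cast_ne_zero.2 hT0)
  rw [rsWave, hexp T hT,
    show 2 * ((T : ℝ) * Real.pi) = ((2 * T : ℕ) : ℝ) * Real.pi by push_cast; ring,
    hexp _ (even_two_mul T), hTπ, mul_comm I, exp_pi_mul_I, (RS.odd_apply_neg_one s).1,
    (RS.odd_apply_neg_one s).2, mul_zero, zero_add, one_mul]
  exact inv_mul_cancel₀ (pow_ne_zero _ two_ne_zero)

theorem norm_rsWave_sub_le (s : ℕ) {T : ℕ} (hT : 4 ^ (s + 1) ≤ T) (x y : ℝ) :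
    ‖rsWave s T x - rsWave s T y‖ ≤ 4 * |x - y| := by
  set P := (RS (2 * s + 1)).1
  set Q := (RS (2 * s + 1)).2
  have hTpos : (0 : ℝ) < T := by exact_mod_cast (Nat.one_le_pow _ _ four_pos).trans hT
  have hδ : |x / T - y / T| = |x - y| / T := by rw [← sub_div, abs_div, Nat.abs_cast]
  obtain ⟨hP, hQ⟩ := RS.norm_odd_le (norm_exp_I_mul_ofReal (y / T)) s
  obtain ⟨hΔP, hΔQ⟩ := RS.norm_odd_sub_le s (x / T) (y / T)
  rw [hδ] at hΔP hΔQ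
  have he1 := norm_exp_I_mul_ofReal_sub_le x y
  have he2 := norm_exp_I_mul_ofReal_sub_le (2 * x) (2 * y)
  rw [← mul_sub, abs_mul, abs_two] at he2
  have h1 := norm_mul_sub_mul_le (exp (I * x)) (P (exp (I * ↑(x / T))))
    (exp (I * y)) (P (exp (I * ↑(y / T))))
  have h2 := norm_mul_sub_mul_le (exp (I * ↑(2 * x))) (Q (exp (I * ↑(x / T))))
    (exp (I * ↑(2 * y))) (Q (exp (I * ↑(y / T))))
  rw [norm_exp_I_mul_ofReal, one_mul] at h1 h2
  have hsum : ‖rsWave s T x - rsWave s T y‖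
      ≤ (2 ^ (s + 1))⁻¹ * (8 * 8 ^ s * (|x - y| / T) + 3 * 2 ^ (s + 1) * |x - y|) := by
    rw [rsWave, rsWave, ← mul_sub, add_sub_add_comm, norm_mul, norm_inv, norm_pow,
      Complex.norm_two]
    gcongr
    refine (norm_add_le _ _).trans ?_
    nlinarith [abs_nonneg (x - y), mul_le_mul he1 hP (norm_nonneg _) (abs_nonneg _),
      mul_le_mul he2 hQ (norm_nonneg _) (by positivity)]
  have h8 : (8 : ℝ) ^ s = 2 ^ s * 4 ^ s := by rw [← mul_pow]; norm_num
  calc ‖rsWave s T x - rsWave s T y‖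
      ≤ (2 ^ (s + 1))⁻¹ * (8 * 8 ^ s * (|x - y| / T) + 3 * 2 ^ (s + 1) * |x - y|) := hsum
    _ = (4 ^ (s + 1) / T + 3) * |x - y| := by field_simp; rw [h8]; ring
    _ ≤ 4 * |x - y| := by
      gcongr
      linarith [(div_le_one hTpos).2 (by exact_mod_cast hT : (4 : ℝ) ^ (s + 1) ≤ T)]

theorem H_large_near_special_points (t : ℕ) (ht : Odd t) (T : ℕ) (hT : T = 2 ^ (t + 10))
    (H : ℝ → ℂ)
    (hH : H = fun x : ℝ =>
      Complex.exp (Complex.I * x) * ((2 : ℂ) ^ (((t : ℂ) + 1) / 2))⁻¹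
          * (RS t).1 (Complex.exp (Complex.I * (x / T)))
        + Complex.exp (2 * Complex.I * x) * ((2 : ℂ) ^ (((t : ℂ) + 1) / 2))⁻¹
          * (RS t).2 (Complex.exp (Complex.I * (x / T)))) :
    (H 0).re = 1 ∧ (H (T * Real.pi)).re = 1 ∧
      ∀ x : ℝ, (|x| ≤ 1 / 8 ∨ |x - T * Real.pi| ≤ 1 / 8) → (H x).re ≥ 1 / 2 := by
  obtain ⟨s, rfl⟩ := ht
  obtain rfl : H = rsWave s T := hH ▸ funext fun x => (rsWave_eq s T x).symm
  have hT4 : 4 ^ (s + 1) ≤ T := by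
    rw [hT, show 4 = 2 ^ 2 from rfl, ← pow_mul]
    exact Nat.pow_le_pow_right two_pos (by omega)
  have h0 := rsWave_zero s T
  have hπ := rsWave_natCast_mul_pi s (hT ▸ Nat.even_pow.2 ⟨even_two, by omega⟩)
    (by rw [hT]; positivity)
  have near (x₀ x : ℝ) (h₀ : rsWave s T x₀ = 1) (hx : |x - x₀| ≤ 1 / 8) :
      (rsWave s T x).re ≥ 1 / 2 := by
    have hnorm : ‖rsWave s T x - 1‖ ≤ 1 / 2 :=
      h₀ ▸ (norm_rsWave_sub_le s hT4 x x₀).trans (by linarith)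
    linarith [sub_le_re_of_norm_sub_le hnorm, one_re]
  refine ⟨by simp [h0], by simp [hπ], fun x hx => hx.elim (fun h => near 0 x h0 ?_) (near _ x hπ)⟩
  simpa using h
end
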